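/- For every semi-meander γ of order n−1 (n ≥ 2), both n·γ and γ·n are semi-meanders of order n. -/

import Mathlib

/-- 1-based position of symbol `e` in the string `p`. -/
def posOf (p : List ℕ) (e : ℕ) : ℕ := p.idxOf e + 1

/-- `x` lies strictly between `a` and `b`. -/
def StrictlyBetween (a b x : ℕ) : Prop := min a b < x ∧ x < max a b

/-- Two same-side arcs with endpoint pairs `{a,b}` and `{c,d}` cross
if exactly one of `c`, `d` lies strictly between `a` and `b`. -/
def ArcsCross (a b c d : ℕ) : Prop :=
  Xor' (StrictlyBetween a b c) (StrictlyBetween a b d)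

/-- A stamp folding of order `n`: a permutation of `1,…,n` (as a list, `p i` is
the stamp at position `i`) such that no two bottom arcs (joining the positions
of stamps `i` and `i+1` for odd `i`) cross, and no two top arcs (even `i`) cross. -/
def IsStampFolding (n : ℕ) (p : List ℕ) : Prop :=
  p.Perm (List.range' 1 n) ∧
  ∀ i j : ℕ, 1 ≤ i → i < j → j + 1 ≤ n → i % 2 = j % 2 →
    ¬ ArcsCross (posOf p i) (posOf p (i + 1)) (posOf p j) (posOf p (j + 1))

/-- A semi-meander of order `n`: a stamp folding in which stamp `n` is visible
from above when `n` is even and from below when `n` is odd, i.e. no arc on the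
relevant side strictly covers the position of stamp `n`. -/
def IsSemiMeander (n : ℕ) (p : List ℕ) : Prop :=
  IsStampFolding n p ∧
  ∀ i : ℕ, 1 ≤ i → i + 1 ≤ n → i % 2 = n % 2 →
    ¬ StrictlyBetween (posOf p i) (posOf p (i + 1)) (posOf p n)

/-!
Adding stamp `n` at either end of a semi-meander `γ` of order `n - 1` moves every old stamp by
the same amount, so the old arcs keep their crossing pattern. The only new arc joins stamp
`n - 1` to the extreme position of stamp `n`: no arc covers that extreme position, and no arc on
the side of the new arc covers stamp `n - 1`, because `γ` is a semi-meander. So the new arc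
crosses nothing and stamp `n` is visible.
-/

theorem StrictMono.strictlyBetween_iff {f : ℕ → ℕ} (hf : StrictMono f) {a b x : ℕ} :
    StrictlyBetween (f a) (f b) (f x) ↔ StrictlyBetween a b x := by
  simp only [StrictlyBetween, ← hf.monotone.map_min, ← hf.monotone.map_max, hf.lt_iff_lt]

theorem StrictMono.arcsCross_iff {f : ℕ → ℕ} (hf : StrictMono f) {a b c d : ℕ} :
    ArcsCross (f a) (f b) (f c) (f d) ↔ ArcsCross a b c d := by
  simp only [ArcsCross, hf.strictlyBetween_iff]

theorem not_arcsCross {a b c d : ℕ} (hc : ¬ StrictlyBetween a b c)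
    (hd : ¬ StrictlyBetween a b d) : ¬ ArcsCross a b c d := by
  rintro (⟨h, -⟩ | ⟨h, -⟩)
  exacts [hc h, hd h]

theorem not_strictlyBetween_of_le {a b x : ℕ} (ha : x ≤ a) (hb : x ≤ b) :
    ¬ StrictlyBetween a b x := by
  unfold StrictlyBetween
  omega

theorem not_strictlyBetween_of_ge {a b x : ℕ} (ha : a ≤ x) (hb : b ≤ x) :
    ¬ StrictlyBetween a b x := by
  unfold StrictlyBetween
  omega

theorem posOf_cons_of_ne {x e : ℕ} (l : List ℕ) (h : e ≠ x) :
    posOf (x :: l) e = posOf l e + 1 := by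
  simp [posOf, List.idxOf_cons_ne l h.symm]

theorem posOf_append_of_mem {e : ℕ} {l : List ℕ} (l' : List ℕ) (h : e ∈ l) :
    posOf (l ++ l') e = posOf l e := by
  simp [posOf, List.idxOf_append_of_mem h]

theorem not_strictlyBetween_posOf_head (x : ℕ) (l : List ℕ) (a b : ℕ) :
    ¬ StrictlyBetween (posOf (x :: l) a) (posOf (x :: l) b) (posOf (x :: l) x) := by
  apply not_strictlyBetween_of_le <;> simp [posOf]

theorem posOf_le_length {e : ℕ} {l : List ℕ} (h : e ∈ l) : posOf l e ≤ l.length := by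
  have := List.idxOf_lt_length_iff.mpr h
  unfold posOf
  omega

theorem not_strictlyBetween_posOf_last {x : ℕ} {l : List ℕ} (hx : x ∉ l) {a b : ℕ}
    (ha : a ∈ l ++ [x]) (hb : b ∈ l ++ [x]) :
    ¬ StrictlyBetween (posOf (l ++ [x]) a) (posOf (l ++ [x]) b) (posOf (l ++ [x]) x) := by
  have hpos : posOf (l ++ [x]) x = (l ++ [x]).length := by
    simp [posOf, List.idxOf_append_of_notMem hx]
  rw [hpos]
  exact not_strictlyBetween_of_ge (posOf_le_length ha) (posOf_le_length hb)

theorem IsSemiMeander.of_insert_extreme {m : ℕ} {γ q : List ℕ} (hγ : IsSemiMeander m γ)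
    (hq : q.Perm (List.range' 1 (m + 1))) {f : ℕ → ℕ} (hf : StrictMono f)
    (hpos : ∀ e ∈ γ, posOf q e = f (posOf γ e))
    (hext : ∀ a ∈ q, ∀ b ∈ q, ¬ StrictlyBetween (posOf q a) (posOf q b) (posOf q (m + 1))) :
    IsSemiMeander (m + 1) q := by
  obtain ⟨⟨hγperm, hcross⟩, hvis⟩ := hγ
  have hmemγ : ∀ e, 1 ≤ e → e ≤ m → e ∈ γ := fun e h1 h2 ↦
    hγperm.mem_iff.mpr (List.mem_range'_1.mpr ⟨h1, by omega⟩)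
  have hmemq : ∀ e, 1 ≤ e → e ≤ m + 1 → e ∈ q := fun e h1 h2 ↦
    hq.mem_iff.mpr (List.mem_range'_1.mpr ⟨h1, by omega⟩)
  refine ⟨⟨hq, fun i j hi hij hj hpar ↦ ?_⟩, fun i hi hin _ ↦
    hext i (hmemq i hi (by omega)) (i + 1) (hmemq (i + 1) (by omega) hin)⟩
  have hi₁ : i ∈ γ := hmemγ i hi (by omega)
  have hi₂ : i + 1 ∈ γ := hmemγ (i + 1) (by omega) (by omega)
  obtain hjm | rfl := Nat.lt_or_eq_of_le (Nat.le_of_succ_le_succ hj)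
  · rw [hpos i hi₁, hpos (i + 1) hi₂, hpos j (hmemγ j (by omega) (by omega)),
      hpos (j + 1) (hmemγ (j + 1) (by omega) hjm), hf.arcsCross_iff]
    exact hcross i j hi hij hjm hpar
  · refine not_arcsCross ?_
      (hext i (hmemq i hi (by omega)) (i + 1) (hmemq (i + 1) (by omega) (by omega)))
    rw [hpos i hi₁, hpos (i + 1) hi₂, hpos j (hmemγ j (by omega) le_rfl), hf.strictlyBetween_iff]
    exact hvis i hi (by omega) hpar

/-- For every semi-meander `γ` of order `n - 1` (with `n ≥ 2`), both `n · γ` and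
`γ · n` are semi-meanders of order `n`. -/
theorem semi_meander_extend (n : ℕ) (hn : 2 ≤ n) (γ : List ℕ)
    (h : IsSemiMeander (n - 1) γ) :
    IsSemiMeander n (n :: γ) ∧ IsSemiMeander n (γ ++ [n]) := by
  obtain ⟨m, rfl⟩ : ∃ m, n = m + 1 := ⟨n - 1, by omega⟩
  rw [Nat.add_sub_cancel] at h
  have hperm : (γ ++ [m + 1]).Perm (List.range' 1 (m + 1)) := by
    rw [List.range'_concat, Nat.one_mul, Nat.add_comm 1 m]
    exact h.1.1.append_right _
  have hnew : m + 1 ∉ γ := by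
    rw [h.1.1.mem_iff, List.mem_range'_1]
    omega
  have hpos_append : ∀ e ∈ γ, posOf (γ ++ [m + 1]) e = posOf γ e := fun e he ↦
    posOf_append_of_mem _ he
  have hpos_cons : ∀ e ∈ γ, posOf ((m + 1) :: γ) e = posOf γ e + 1 := fun e he ↦
    posOf_cons_of_ne γ (ne_of_mem_of_not_mem he hnew)
  exact ⟨h.of_insert_extreme ((List.perm_append_singleton _ _).symm.trans hperm)
      (fun _ _ ↦ Nat.succ_lt_succ) hpos_cons
      (fun a _ b _ ↦ not_strictlyBetween_posOf_head _ _ a b),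
    h.of_insert_extreme hperm strictMono_id hpos_append
      (fun _ ha _ hb ↦ not_strictlyBetween_posOf_last hnew ha hb)⟩
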